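/- arXiv:1308.4292 — 5 statements merged into one kernel-verified Lean document; each statement's English description precedes it below -/
import Mathlib

section
/- Let A be a real k×m matrix and B a real l×n matrix, and suppose there are vectors u ∈ ℝᵐ and v ∈ ℝⁿ such that the kernel of the map x ↦ A x is exactly the span of u and the kernel of the map y ↦ B y is exactly the span of v. Then an m×n real matrix Φ satisfies Aᵀ A Φ + Φ Bᵀ B = 0 if and only if Φ = c · u vᵀ for some real scalar c. In other words, the null space of the Sylvester operator S(Φ) = Aᵀ A Φ + Φ Bᵀ B is spanned by the rank-one matrix u vᵀ. -/
open Matrix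

/-! Taking the trace of `Φᴴ (AᴴAΦ + ΦBᴴB)` gives `‖AΦ‖² + ‖ΦBᴴ‖² = 0`, so `AΦ = 0` and `ΦBᴴ = 0`.
The first puts every column of `Φ` in `ker A = span u`, so `Φ = u wᵀ`; the second then reads
`u (Bw)ᵀ = 0`, so `Bw = 0` unless `u = 0`, i.e. `w ∈ span v`. -/

namespace Matrix

variable {R : Type*} {k l m n : Type*} [Fintype m] [Fintype n]

theorem trace_conjTranspose_mul_sylvester [Fintype k] [Fintype l] [CommRing R] [StarRing R]
    (A : Matrix k m R) (B : Matrix l n R) (Φ : Matrix m n R) :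
    (Φᴴ * (Aᴴ * A * Φ + Φ * (Bᴴ * B))).trace =
      ((A * Φ)ᴴ * (A * Φ)).trace + (Φ * Bᴴ * (Φ * Bᴴ)ᴴ).trace := by
  rw [Matrix.mul_add, trace_add, conjTranspose_mul, conjTranspose_mul,
    conjTranspose_conjTranspose]
  congr 1
  · simp only [Matrix.mul_assoc]
  · rw [show Φ * Bᴴ * (B * Φᴴ) = Φ * (Bᴴ * B) * Φᴴ by simp only [Matrix.mul_assoc],
      trace_mul_comm _ Φᴴ]

theorem mul_eq_zero_and_mul_conjTranspose_eq_zero_of_sylvester [Fintype k] [Fintype l]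
    [CommRing R] [PartialOrder R] [StarRing R] [StarOrderedRing R] [NoZeroDivisors R]
    {A : Matrix k m R} {B : Matrix l n R} {Φ : Matrix m n R} (h : Aᴴ * A * Φ + Φ * (Bᴴ * B) = 0) :
    A * Φ = 0 ∧ Φ * Bᴴ = 0 := by
  have htrace := trace_conjTranspose_mul_sylvester A B Φ
  rw [h, Matrix.mul_zero, trace_zero, eq_comm,
    add_eq_zero_iff_of_nonneg (posSemidef_conjTranspose_mul_self _).trace_nonneg
      (posSemidef_self_mul_conjTranspose _).trace_nonneg] at htrace
  exact ⟨trace_conjTranspose_mul_self_eq_zero_iff.mp htrace.1,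
    trace_mul_conjTranspose_self_eq_zero_iff.mp htrace.2⟩

variable [CommRing R] {A : Matrix k m R} {B : Matrix l n R} {u : m → R} {v : n → R}

theorem exists_eq_vecMulVec_of_mul_eq_zero (hA : ∀ x, A *ᵥ x = 0 → ∃ c : R, x = c • u)
    {p : Type*} {Φ : Matrix m p R} (h : A * Φ = 0) : ∃ w : p → R, Φ = vecMulVec u w := by
  have hcol (j : p) : ∃ c : R, Φᵀ j = c • u := hA _ <|
    funext fun i => congr_fun (congr_fun h i) j
  choose w hw using hcol
  exact ⟨w, Matrix.ext fun i j => by simpa [vecMulVec_apply, mul_comm] using congr_fun (hw j) i⟩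

theorem exists_eq_smul_vecMulVec_of_mul_eq_zero [NoZeroDivisors R]
    (hA : ∀ x, A *ᵥ x = 0 → ∃ c : R, x = c • u) (hB : ∀ y, B *ᵥ y = 0 → ∃ c : R, y = c • v)
    {Φ : Matrix m n R} (hAΦ : A * Φ = 0) (hΦB : Φ * Bᵀ = 0) :
    ∃ c : R, Φ = c • vecMulVec u v := by
  obtain ⟨w, rfl⟩ := exists_eq_vecMulVec_of_mul_eq_zero hA hAΦ
  rw [vecMulVec_mul, vecMul_transpose] at hΦB
  by_cases hu : u = 0
  · exact ⟨0, by simp [hu]⟩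
  obtain ⟨i, hi⟩ := Function.ne_iff.mp hu
  obtain ⟨c, rfl⟩ := hB w <| funext fun j => (mul_eq_zero.mp congr($hΦB i j)).resolve_left hi
  exact ⟨c, vecMulVec_smul c u v⟩

theorem sylvester_vecMulVec_eq_zero [Fintype k] [Fintype l] (hu : A *ᵥ u = 0)
    (hv : B *ᵥ v = 0) : Aᵀ * A * vecMulVec u v + vecMulVec u v * (Bᵀ * B) = 0 := by
  have hu0 : vecMulVec u (0 : l → R) = 0 := ext fun _ _ => mul_zero _
  rw [Matrix.mul_assoc, mul_vecMulVec, hu, ← Matrix.mul_assoc, vecMulVec_mul, vecMul_transpose,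
    hv, zero_vecMulVec, hu0, Matrix.mul_zero, Matrix.zero_mul, add_zero]

end Matrix

/-- If `ker A = span{u}` and `ker B = span{v}`, then `Φ` satisfies
`Aᵀ A Φ + Φ Bᵀ B = 0` iff `Φ = c · u vᵀ` for some scalar `c`; i.e. the null space of
the Sylvester operator is spanned by the rank-one matrix `u vᵀ`. -/
theorem sylvester_null_space {k l m n : ℕ}
    (A : Matrix (Fin k) (Fin m) ℝ) (B : Matrix (Fin l) (Fin n) ℝ)
    (u : Fin m → ℝ) (v : Fin n → ℝ)
    (hA : ∀ x : Fin m → ℝ, A *ᵥ x = 0 ↔ ∃ c : ℝ, x = c • u)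
    (hB : ∀ y : Fin n → ℝ, B *ᵥ y = 0 ↔ ∃ c : ℝ, y = c • v)
    (Φ : Matrix (Fin m) (Fin n) ℝ) :
    Aᵀ * A * Φ + Φ * (Bᵀ * B) = 0 ↔ ∃ c : ℝ, Φ = c • vecMulVec u v := by
  constructor
  · intro h
    simp only [← conjTranspose_eq_transpose_of_trivial] at h
    obtain ⟨hAΦ, hΦB⟩ := mul_eq_zero_and_mul_conjTranspose_eq_zero_of_sylvester h
    rw [conjTranspose_eq_transpose_of_trivial] at hΦB
    exact exists_eq_smul_vecMulVec_of_mul_eq_zero (fun x => (hA x).mp) (fun y => (hB y).mp)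
      hAΦ hΦB
  · rintro ⟨c, rfl⟩
    have hu : A *ᵥ u = 0 := (hA u).mpr ⟨1, (one_smul ℝ u).symm⟩
    have hv : B *ᵥ v = 0 := (hB v).mpr ⟨1, (one_smul ℝ v).symm⟩
    rw [Matrix.mul_smul, Matrix.smul_mul, ← smul_add, sylvester_vecMulVec_eq_zero hu hv, smul_zero]
end

section
/- Let D_y be a real k×m matrix and D_x a real l×n matrix such that the kernel of x ↦ D_y x is exactly the span of the all-ones vector 𝟙_m ∈ ℝᵐ and the kernel of x ↦ D_x x is exactly the span of the all-ones vector 𝟙_n ∈ ℝⁿ. Let G_y be k×n and G_x be m×l real matrices, and define ε(Z) = ‖Z D_xᵀ − G_x‖_F² + ‖D_y Z − G_y‖_F². If Z₁ and Z₂ both minimize ε, then Z₁ − Z₂ = c · 𝟙_m 𝟙_nᵀ for some real constant c; that is, the least-squares reconstruction is unique up to an additive constant of integration. -/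
open Matrix

/-- Squared Frobenius norm of a real matrix. -/
noncomputable def frobSq {a b : Type*} [Fintype a] [Fintype b]
    (M : Matrix a b ℝ) : ℝ := ∑ i, ∑ j, (M i j) ^ 2

/-!
Every summand of the cost is the squared norm of an affine function of `Z`, so the
parallelogram law at the midpoint `M` of two matrices gives
`ε Z₁ + ε Z₂ = 2 ε M + (‖(Z₁ - Z₂) D_xᵀ‖² + ‖D_y (Z₁ - Z₂)‖²) / 2`.
If `Z₁` and `Z₂` both minimize `ε`, the last term must vanish: the columns of
`Z₁ - Z₂` lie in the kernel of `D_y` and its rows in the kernel of `D_x`, so all of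
them are constant vectors, and `Z₁ - Z₂` is a constant matrix.
-/

section FrobSq

variable {a b : Type*} [Fintype a] [Fintype b]

lemma frobSq_nonneg (M : Matrix a b ℝ) : 0 ≤ frobSq M :=
  Finset.sum_nonneg fun _ _ => Finset.sum_nonneg fun _ _ => sq_nonneg _

lemma eq_zero_of_frobSq_eq_zero {M : Matrix a b ℝ} (h : frobSq M = 0) : M = 0 := by
  ext i j
  have hi := (Fintype.sum_eq_zero_iff_of_nonneg fun i =>
    Finset.sum_nonneg fun j _ => sq_nonneg (M i j)).1 h
  have hij := (Fintype.sum_eq_zero_iff_of_nonneg fun j => sq_nonneg (M i j)).1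
    (congrFun hi i)
  exact pow_eq_zero_iff two_ne_zero |>.1 (congrFun hij j)

lemma frobSq_sub_add_frobSq_sub (P Q G : Matrix a b ℝ) :
    frobSq (P - G) + frobSq (Q - G)
      = 2 * frobSq ((2⁻¹ : ℝ) • (P + Q) - G) + frobSq (P - Q) / 2 := by
  simp only [frobSq, Matrix.sub_apply, Matrix.add_apply, Matrix.smul_apply, smul_eq_mul,
    Finset.mul_sum, Finset.sum_div, ← Finset.sum_add_distrib]
  exact Finset.sum_congr rfl fun _ _ => Finset.sum_congr rfl fun _ _ => by ring

end FrobSq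

lemma sub_mul_eq_zero_and_mul_sub_eq_zero_of_forall_le {m n p q : Type*} [Fintype m]
    [Fintype n] [Fintype p] [Fintype q] {A : Matrix p m ℝ} {B : Matrix n q ℝ}
    {G : Matrix m q ℝ} {H : Matrix p n ℝ} {ε : Matrix m n ℝ → ℝ}
    (hε : ∀ Z, ε Z = frobSq (Z * B - G) + frobSq (A * Z - H)) {Z₁ Z₂ : Matrix m n ℝ}
    (h₁ : ∀ W, ε Z₁ ≤ ε W) (h₂ : ∀ W, ε Z₂ ≤ ε W) :
    (Z₁ - Z₂) * B = 0 ∧ A * (Z₁ - Z₂) = 0 := by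
  set M := (2⁻¹ : ℝ) • (Z₁ + Z₂)
  have hmid : ε Z₁ + ε Z₂
      = 2 * ε M + (frobSq ((Z₁ - Z₂) * B) + frobSq (A * (Z₁ - Z₂))) / 2 := by
    have hparB := frobSq_sub_add_frobSq_sub (Z₁ * B) (Z₂ * B) G
    have hparA := frobSq_sub_add_frobSq_sub (A * Z₁) (A * Z₂) H
    have hMB : M * B = (2⁻¹ : ℝ) • (Z₁ * B + Z₂ * B) := by
      rw [Matrix.smul_mul, Matrix.add_mul]
    have hAM : A * M = (2⁻¹ : ℝ) • (A * Z₁ + A * Z₂) := by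
      rw [Matrix.mul_smul, Matrix.mul_add]
    rw [hε, hε, hε, hMB, hAM, Matrix.sub_mul, Matrix.mul_sub]
    linarith
  have hB := frobSq_nonneg ((Z₁ - Z₂) * B)
  have hA := frobSq_nonneg (A * (Z₁ - Z₂))
  have hsum : frobSq ((Z₁ - Z₂) * B) + frobSq (A * (Z₁ - Z₂)) = 0 := by
    linarith [h₁ M, h₂ M]
  exact ⟨eq_zero_of_frobSq_eq_zero (by linarith), eq_zero_of_frobSq_eq_zero (by linarith)⟩

lemma apply_eq_of_mul_eq_zero {R m n p : Type*} [Semiring R] [Fintype m]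
    {A : Matrix p m R} {D : Matrix m n R}
    (hA : ∀ x : m → R, A *ᵥ x = 0 → ∃ c : R, x = c • fun _ => 1) (h : A * D = 0)
    (i i' : m) (j : n) : D i j = D i' j := by
  obtain ⟨c, hc⟩ := hA (fun i => D i j) (by
    funext r
    simpa [mulVec, dotProduct, mul_apply] using congrFun (congrFun h r) j)
  simpa using (congrFun hc i).trans (congrFun hc i').symm

lemma apply_eq_of_mul_transpose_eq_zero {R m n p : Type*} [CommSemiring R] [Fintype n]
    {B : Matrix p n R} {D : Matrix m n R}
    (hB : ∀ x : n → R, B *ᵥ x = 0 → ∃ c : R, x = c • fun _ => 1) (h : D * Bᵀ = 0)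
    (i : m) (j j' : n) : D i j = D i j' :=
  apply_eq_of_mul_eq_zero (D := Dᵀ) hB
    (by rw [← transpose_transpose B, ← transpose_mul, h, transpose_zero]) j j' i

lemma exists_eq_smul_vecMulVec_one {R ι κ : Type*} [Semiring R] {D : Matrix ι κ R}
    (hrow : ∀ i j j', D i j = D i j') (hcol : ∀ i i' j, D i j = D i' j) :
    ∃ c : R, D = c • vecMulVec (fun _ => (1 : R)) (fun _ => (1 : R)) := by
  by_cases hne : Nonempty (ι × κ)
  · obtain ⟨i₀, j₀⟩ := hne.some
    refine ⟨D i₀ j₀, ?_⟩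
    ext i j
    simp [vecMulVec, hrow i j j₀, hcol i i₀ j₀]
  · exact ⟨0, by ext i j; exact (hne ⟨(i, j)⟩).elim⟩

/-- If the kernels of the derivative operators are exactly the spans of the
all-ones vectors, then any two minimizers of the global least-squares
reconstruction cost differ by an additive constant:
`Z₁ − Z₂ = c · 𝟙_m 𝟙_nᵀ`. -/
theorem gls_minimizers_unique_up_to_constant {k l m n : ℕ}
    (Dy : Matrix (Fin k) (Fin m) ℝ) (Dx : Matrix (Fin l) (Fin n) ℝ)
    (hDy : ∀ x : Fin m → ℝ, Dy *ᵥ x = 0 ↔ ∃ c : ℝ, x = c • (fun _ => (1 : ℝ)))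
    (hDx : ∀ x : Fin n → ℝ, Dx *ᵥ x = 0 ↔ ∃ c : ℝ, x = c • (fun _ => (1 : ℝ)))
    (Gy : Matrix (Fin k) (Fin n) ℝ) (Gx : Matrix (Fin m) (Fin l) ℝ)
    (ε : Matrix (Fin m) (Fin n) ℝ → ℝ)
    (hε : ∀ Z, ε Z = frobSq (Z * Dxᵀ - Gx) + frobSq (Dy * Z - Gy))
    (Z₁ Z₂ : Matrix (Fin m) (Fin n) ℝ)
    (h₁ : ∀ W, ε Z₁ ≤ ε W) (h₂ : ∀ W, ε Z₂ ≤ ε W) :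
    ∃ c : ℝ, Z₁ - Z₂ = c • vecMulVec (fun _ => (1 : ℝ)) (fun _ => (1 : ℝ)) := by
  obtain ⟨hrows, hcols⟩ := sub_mul_eq_zero_and_mul_sub_eq_zero_of_forall_le hε h₁ h₂
  exact exists_eq_smul_vecMulVec_one
    (apply_eq_of_mul_transpose_eq_zero (fun x => (hDx x).1) hrows)
    (apply_eq_of_mul_eq_zero (fun x => (hDy x).1) hcols)
end

section
/- Let D_y, L_y be real matrices with m columns, D_x, L_x real matrices with n columns, G_y, G_x real matrices of compatible sizes, Z₀ a real m×n matrix, and μ, λ real parameters. Define the Tikhonov-regularized cost ε(Z) = ‖D_y Z − G_y‖_F² + ‖Z D_xᵀ − G_x‖_F² + μ² ‖L_y (Z − Z₀)‖_F² + λ² ‖(Z − Z₀) L_xᵀ‖_F² for Z a real m×n matrix. Then Z minimizes ε if and only if Z satisfies the Sylvester equation (D_yᵀ D_y + μ² L_yᵀ L_y) Z + Z (D_xᵀ D_x + λ² L_xᵀ L_x) = D_yᵀ G_y + G_x D_x + μ² L_yᵀ L_y Z₀ + λ² Z₀ L_xᵀ L_x. -/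
/-!
The cost is quadratic in `Z`: with the Frobenius inner product `⟨A, B⟩ = tr (Aᵀ B)`,
`ε (Z + H) = ε Z + 2 ⟨R Z, H⟩ + q H`, where `q ≥ 0` is the cost with all data set to zero and
`R Z` is the difference of the two sides of the Sylvester equation (each factor multiplying `H`
moves to the other side of the inner product as its transpose). A quadratic expansion with a
nonnegative, 2-homogeneous remainder has a global minimum at `Z` exactly when its linear part
vanishes, and `⟨R Z, ·⟩ = 0` forces `R Z = 0` by testing against `H = R Z`.
-/

open Matrix

theorem forall_le_iff_of_quadratic_expansion {V : Type*} [AddCommGroup V] [Module ℝ V]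
    {f ℓ q : V → ℝ} {z : V} (hℓ : ∀ (t : ℝ) h, ℓ (t • h) = t * ℓ h)
    (hq_nonneg : ∀ h, 0 ≤ q h) (hq : ∀ (t : ℝ) h, q (t • h) = t ^ 2 * q h)
    (hf : ∀ h, f (z + h) = f z + 2 * ℓ h + q h) :
    (∀ w, f z ≤ f w) ↔ ∀ h, ℓ h = 0 := by
  constructor
  · intro hmin h
    -- Along `z - s • h` with `s = ℓ h / (q h + 1)` the increase of `f` is `-s² (q h + 2) ≤ -2 s²`.
    set s := ℓ h / (q h + 1)
    have hℓs : ℓ h = s * (q h + 1) := by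
      rw [div_mul_cancel₀ _ (by linarith [hq_nonneg h])]
    have hstep := hmin (z + (-s) • h)
    rw [hf, hℓ, hq] at hstep
    have hs : s = 0 := by nlinarith [hq_nonneg h, sq_nonneg s]
    rw [hℓs, hs, zero_mul]
  · intro hℓ0 w
    rw [← add_sub_cancel z w, hf, hℓ0]
    linarith [hq_nonneg (w - z)]

section Frobenius

variable {m n k : Type*} [Fintype m] [Fintype n] [Fintype k]

noncomputable def frobInner (A B : Matrix m n ℝ) : ℝ := (Aᵀ * B).trace

theorem frobInner_comm (A B : Matrix m n ℝ) : frobInner A B = frobInner B A := by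
  rw [frobInner, frobInner, ← trace_transpose, transpose_mul, transpose_transpose]

theorem frobInner_add_left (A B C : Matrix m n ℝ) :
    frobInner (A + B) C = frobInner A C + frobInner B C := by
  simp only [frobInner, transpose_add, Matrix.add_mul, trace_add]

theorem frobInner_smul_left (r : ℝ) (A B : Matrix m n ℝ) :
    frobInner (r • A) B = r * frobInner A B := by
  simp only [frobInner, transpose_smul, Matrix.smul_mul, trace_smul, smul_eq_mul]

theorem frobInner_smul_right (r : ℝ) (A B : Matrix m n ℝ) :
    frobInner A (r • B) = r * frobInner A B := by
  rw [frobInner_comm, frobInner_smul_left, frobInner_comm]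

theorem frobInner_mul_left (X : Matrix k n ℝ) (A : Matrix k m ℝ) (H : Matrix m n ℝ) :
    frobInner X (A * H) = frobInner (Aᵀ * X) H := by
  rw [frobInner, frobInner, transpose_mul, transpose_transpose, Matrix.mul_assoc]

theorem frobInner_mul_right (X : Matrix m k ℝ) (H : Matrix m n ℝ) (A : Matrix n k ℝ) :
    frobInner X (H * A) = frobInner (X * Aᵀ) H := by
  rw [frobInner, frobInner, transpose_mul, transpose_transpose, ← Matrix.mul_assoc,
    trace_mul_cycle]

theorem frobSq_eq_frobInner (A : Matrix m n ℝ) : frobSq A = frobInner A A := by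
  simp only [frobSq, frobInner, trace, diag, mul_apply, transpose_apply, sq]
  exact Finset.sum_comm

theorem frobSq_nonneg_s10 (A : Matrix m n ℝ) : 0 ≤ frobSq A := by
  unfold frobSq
  positivity

theorem frobSq_eq_zero_iff {A : Matrix m n ℝ} : frobSq A = 0 ↔ A = 0 := by
  rw [frobSq_eq_frobInner, frobInner, ← conjTranspose_eq_transpose_of_trivial,
    trace_conjTranspose_mul_self_eq_zero_iff]

theorem frobSq_add (A B : Matrix m n ℝ) :
    frobSq (A + B) = frobSq A + 2 * frobInner A B + frobSq B := by
  simp only [frobSq_eq_frobInner, frobInner_add_left, frobInner_comm _ (A + B)]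
  rw [frobInner_comm B A]
  ring

theorem frobSq_smul (r : ℝ) (A : Matrix m n ℝ) : frobSq (r • A) = r ^ 2 * frobSq A := by
  rw [frobSq_eq_frobInner, frobSq_eq_frobInner, frobInner_smul_left, frobInner_smul_right,
    ← mul_assoc, sq]

theorem forall_frobInner_eq_zero_iff (E : Matrix m n ℝ) :
    (∀ H, frobInner E H = 0) ↔ E = 0 := by
  refine ⟨fun h => frobSq_eq_zero_iff.mp ?_, fun hE H => by simp [hE, frobInner]⟩
  rw [frobSq_eq_frobInner, h]

end Frobenius

section Tikhonov

variable {m n k₁ k₂ l₁ l₂ : Type*} [Fintype m] [Fintype n] [Fintype k₁] [Fintype k₂]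
  [Fintype l₁] [Fintype l₂]
  (Dy : Matrix k₁ m ℝ) (Ly : Matrix k₂ m ℝ) (Dx : Matrix l₁ n ℝ) (Lx : Matrix l₂ n ℝ)
  (Gy : Matrix k₁ n ℝ) (Gx : Matrix m l₁ ℝ) (Z₀ : Matrix m n ℝ) (μ lam : ℝ)

noncomputable def tikhonovCost (Z : Matrix m n ℝ) : ℝ :=
  frobSq (Dy * Z - Gy) + frobSq (Z * Dxᵀ - Gx)
    + μ ^ 2 * frobSq (Ly * (Z - Z₀)) + lam ^ 2 * frobSq ((Z - Z₀) * Lxᵀ)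

def sylvesterResidual (Z : Matrix m n ℝ) : Matrix m n ℝ :=
  (Dyᵀ * Dy + μ ^ 2 • (Lyᵀ * Ly)) * Z + Z * (Dxᵀ * Dx + lam ^ 2 • (Lxᵀ * Lx)) -
    (Dyᵀ * Gy + Gx * Dx + μ ^ 2 • (Lyᵀ * Ly * Z₀) + lam ^ 2 • (Z₀ * (Lxᵀ * Lx)))

theorem tikhonovCost_nonneg (Z : Matrix m n ℝ) :
    0 ≤ tikhonovCost Dy Ly Dx Lx Gy Gx Z₀ μ lam Z := by
  unfold tikhonovCost
  have := frobSq_nonneg_s10 (Dy * Z - Gy)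
  have := frobSq_nonneg_s10 (Z * Dxᵀ - Gx)
  have := frobSq_nonneg_s10 (Ly * (Z - Z₀))
  have := frobSq_nonneg_s10 ((Z - Z₀) * Lxᵀ)
  positivity

theorem tikhonovCost_zero_smul (t : ℝ) (H : Matrix m n ℝ) :
    tikhonovCost Dy Ly Dx Lx 0 0 0 μ lam (t • H) =
      t ^ 2 * tikhonovCost Dy Ly Dx Lx 0 0 0 μ lam H := by
  simp only [tikhonovCost, sub_zero, Matrix.mul_smul, Matrix.smul_mul, frobSq_smul]
  ring

theorem sylvesterResidual_eq (Z : Matrix m n ℝ) :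
    sylvesterResidual Dy Ly Dx Lx Gy Gx Z₀ μ lam Z =
      Dyᵀ * (Dy * Z - Gy) + (Z * Dxᵀ - Gx) * Dx
        + μ ^ 2 • (Lyᵀ * (Ly * (Z - Z₀))) + lam ^ 2 • ((Z - Z₀) * Lxᵀ * Lx) := by
  simp only [sylvesterResidual, Matrix.mul_sub, Matrix.sub_mul, Matrix.add_mul, Matrix.mul_add,
    Matrix.mul_smul, Matrix.smul_mul, Matrix.mul_assoc, smul_sub]
  abel

theorem tikhonovCost_add (Z H : Matrix m n ℝ) :
    tikhonovCost Dy Ly Dx Lx Gy Gx Z₀ μ lam (Z + H) =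
      tikhonovCost Dy Ly Dx Lx Gy Gx Z₀ μ lam Z
        + 2 * frobInner (sylvesterResidual Dy Ly Dx Lx Gy Gx Z₀ μ lam Z) H
        + tikhonovCost Dy Ly Dx Lx 0 0 0 μ lam H := by
  have hDy : Dy * (Z + H) - Gy = (Dy * Z - Gy) + Dy * H := by rw [Matrix.mul_add]; abel
  have hDx : (Z + H) * Dxᵀ - Gx = (Z * Dxᵀ - Gx) + H * Dxᵀ := by rw [Matrix.add_mul]; abel
  have hLy : Ly * (Z + H - Z₀) = Ly * (Z - Z₀) + Ly * H := by
    rw [add_sub_right_comm, Matrix.mul_add]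
  have hLx : (Z + H - Z₀) * Lxᵀ = (Z - Z₀) * Lxᵀ + H * Lxᵀ := by
    rw [add_sub_right_comm, Matrix.add_mul]
  simp only [tikhonovCost, hDy, hDx, hLy, hLx, frobSq_add, sub_zero]
  rw [frobInner_mul_left _ Dy, frobInner_mul_left _ Ly, frobInner_mul_right _ _ Dxᵀ,
    frobInner_mul_right _ _ Lxᵀ, transpose_transpose, transpose_transpose, sylvesterResidual_eq]
  simp only [frobInner_add_left, frobInner_smul_left]
  ring

end Tikhonov

/-- Tikhonov regularization: `Z` minimizes
`ε(Z) = ‖Dy Z − Gy‖_F² + ‖Z Dxᵀ − Gx‖_F² + μ²‖Ly(Z − Z₀)‖_F² + λ²‖(Z − Z₀)Lxᵀ‖_F²`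
iff `Z` satisfies the Sylvester equation
`(Dyᵀ Dy + μ² Lyᵀ Ly) Z + Z (Dxᵀ Dx + λ² Lxᵀ Lx)
  = Dyᵀ Gy + Gx Dx + μ² Lyᵀ Ly Z₀ + λ² Z₀ Lxᵀ Lx`. -/
theorem tikhonov_minimizer_iff_sylvester {k₁ k₂ l₁ l₂ m n : ℕ}
    (Dy : Matrix (Fin k₁) (Fin m) ℝ) (Ly : Matrix (Fin k₂) (Fin m) ℝ)
    (Dx : Matrix (Fin l₁) (Fin n) ℝ) (Lx : Matrix (Fin l₂) (Fin n) ℝ)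
    (Gy : Matrix (Fin k₁) (Fin n) ℝ) (Gx : Matrix (Fin m) (Fin l₁) ℝ)
    (Z₀ : Matrix (Fin m) (Fin n) ℝ) (μ lam : ℝ)
    (ε : Matrix (Fin m) (Fin n) ℝ → ℝ)
    (hε : ∀ Z, ε Z = frobSq (Dy * Z - Gy) + frobSq (Z * Dxᵀ - Gx)
      + μ ^ 2 * frobSq (Ly * (Z - Z₀)) + lam ^ 2 * frobSq ((Z - Z₀) * Lxᵀ))
    (Z : Matrix (Fin m) (Fin n) ℝ) :
    (∀ W : Matrix (Fin m) (Fin n) ℝ, ε Z ≤ ε W) ↔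
      (Dyᵀ * Dy + μ ^ 2 • (Lyᵀ * Ly)) * Z + Z * (Dxᵀ * Dx + lam ^ 2 • (Lxᵀ * Lx)) =
        Dyᵀ * Gy + Gx * Dx + μ ^ 2 • (Lyᵀ * Ly * Z₀) + lam ^ 2 • (Z₀ * (Lxᵀ * Lx)) := by
  obtain rfl : ε = tikhonovCost Dy Ly Dx Lx Gy Gx Z₀ μ lam := funext hε
  rw [forall_le_iff_of_quadratic_expansion (fun t H => frobInner_smul_right t _ H)
    (tikhonovCost_nonneg Dy Ly Dx Lx 0 0 0 μ lam) (tikhonovCost_zero_smul Dy Ly Dx Lx μ lam)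
    (tikhonovCost_add Dy Ly Dx Lx Gy Gx Z₀ μ lam Z), forall_frobInner_eq_zero_iff,
    sylvesterResidual, sub_eq_zero]
end

section
/- Let Λ_xy, Λ_yy be symmetric positive definite real m×m matrices and Λ_xx, Λ_yx symmetric positive definite real n×n matrices, let D_y be a real m×m matrix, D_x a real n×n matrix, and G_y, G_x real m×n matrices. Define the weighted (Mahalanobis) cost ε(Z) = trace( Λ_xy⁻¹ (Z D_xᵀ − G_x) Λ_xx⁻¹ (Z D_xᵀ − G_x)ᵀ ) + trace( Λ_yy⁻¹ (D_y Z − G_y) Λ_yx⁻¹ (D_y Z − G_y)ᵀ ) for Z a real m×n matrix. Then Z minimizes ε if and only if Z satisfies D_yᵀ Λ_yy⁻¹ D_y Z Λ_yx⁻¹ + Λ_xy⁻¹ Z D_xᵀ Λ_xx⁻¹ D_x = D_yᵀ Λ_yy⁻¹ G_y Λ_yx⁻¹ + Λ_xy⁻¹ G_x Λ_xx⁻¹ D_x. -/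
/-!
Expanding the cost around `Z` gives `ε (Z + E) = ε Z + 2 tr (G Eᵀ) + q E`, where `G` is the
difference of the two sides of the normal equations and `q E ≥ 0` because the inverse covariances
are positive semidefinite. So `Z` is a minimizer as soon as `G = 0`; conversely, at a minimizer
`t ↦ 2 t tr (G Eᵀ) + t² q E` has a minimum at `0`, so its derivative `2 tr (G Eᵀ)` vanishes for
every `E`, and taking `E = G` gives `G = 0`.
-/

open Matrix

theorem eq_zero_of_forall_mul_add_sq_mul_nonneg {a b : ℝ} (h : ∀ t : ℝ, 0 ≤ t * a + t ^ 2 * b) :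
    a = 0 := by
  have hmin : IsLocalMin (fun t : ℝ => t * a + t ^ 2 * b) 0 :=
    Filter.Eventually.of_forall fun t => by simpa using h t
  have hderiv : HasDerivAt (fun t : ℝ => t * a + t ^ 2 * b) a 0 := by
    simpa using
      ((hasDerivAt_id' (0 : ℝ)).mul_const a).fun_add ((hasDerivAt_pow 2 (0 : ℝ)).mul_const b)
  exact hmin.hasDerivAt_eq_zero hderiv

theorem forall_le_iff_forall_eq_zero_of_quadratic_expansion {V : Type*} [AddCommGroup V]
    [Module ℝ V] {f g q : V → ℝ} {z : V} (hg : ∀ (t : ℝ) e, g (t • e) = t * g e)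
    (hq : ∀ (t : ℝ) e, q (t • e) = t ^ 2 * q e) (hq_nonneg : ∀ e, 0 ≤ q e)
    (hf : ∀ e, f (z + e) = f z + g e + q e) :
    (∀ w, f z ≤ f w) ↔ ∀ e, g e = 0 := by
  refine ⟨fun hmin e => eq_zero_of_forall_mul_add_sq_mul_nonneg (b := q e) fun t => ?_,
    fun hg0 w => ?_⟩
  · have := hmin (z + t • e)
    rw [hf, hg, hq] at this
    linarith
  · have := hf (w - z)
    rw [add_sub_cancel, hg0] at this
    linarith [hq_nonneg (w - z)]

namespace Matrix

variable {k l p q : Type*} [Fintype k] [Fintype l] [Fintype p] [Fintype q]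

open scoped ComplexOrder in
theorem trace_mul_nonneg_of_posSemidef {𝕜 : Type*} [RCLike 𝕜] {P Q : Matrix k k 𝕜}
    (hP : P.PosSemidef) (hQ : Q.PosSemidef) : 0 ≤ trace (P * Q) := by
  classical
  open scoped MatrixOrder in
  obtain ⟨B, rfl⟩ := CStarAlgebra.nonneg_iff_eq_star_mul_self.mp hP.nonneg
  rw [star_eq_conjTranspose, Matrix.mul_assoc, trace_mul_comm]
  exact (hQ.mul_mul_conjTranspose_same B).trace_nonneg

theorem trace_mul_mul_mul_transpose_nonneg {A : Matrix k k ℝ} {B : Matrix l l ℝ}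
    (hA : A.PosSemidef) (hB : B.PosSemidef) (M : Matrix k l ℝ) :
    0 ≤ trace (A * M * B * Mᵀ) := by
  rw [Matrix.mul_assoc, Matrix.mul_assoc, ← Matrix.mul_assoc M,
    ← conjTranspose_eq_transpose_of_trivial]
  exact trace_mul_nonneg_of_posSemidef hA (hB.mul_mul_conjTranspose_same M)

theorem trace_mul_mul_mul_transpose_comm {A : Matrix k k ℝ} {B : Matrix l l ℝ}
    (hA : A.IsSymm) (hB : B.IsSymm) (M N : Matrix k l ℝ) :
    trace (A * M * B * Nᵀ) = trace (A * N * B * Mᵀ) := by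
  rw [← trace_transpose]
  simp only [transpose_mul, transpose_transpose, hA.eq, hB.eq, Matrix.mul_assoc]
  rw [trace_mul_comm A]
  simp only [Matrix.mul_assoc]

theorem trace_mul_add_mul_mul_transpose_add {A : Matrix k k ℝ} {B : Matrix l l ℝ}
    (hA : A.IsSymm) (hB : B.IsSymm) (M N : Matrix k l ℝ) :
    trace (A * (M + N) * B * (M + N)ᵀ) =
      trace (A * M * B * Mᵀ) + 2 * trace (A * M * B * Nᵀ) + trace (A * N * B * Nᵀ) := by
  simp only [transpose_add, Matrix.mul_add, Matrix.add_mul, trace_add]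
  rw [trace_mul_mul_mul_transpose_comm hA hB N M]
  ring

theorem forall_trace_mul_transpose_eq_zero_iff {G : Matrix k l ℝ} :
    (∀ E : Matrix k l ℝ, trace (G * Eᵀ) = 0) ↔ G = 0 := by
  refine ⟨fun h => ?_, fun h E => by simp [h]⟩
  rw [← trace_mul_conjTranspose_self_eq_zero_iff, conjTranspose_eq_transpose_of_trivial]
  exact h G

theorem trace_weighted_cost_add {A : Matrix k k ℝ} {B : Matrix q q ℝ} {C : Matrix p p ℝ}
    {D : Matrix l l ℝ} (hA : A.IsSymm) (hB : B.IsSymm) (hC : C.IsSymm) (hD : D.IsSymm)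
    (Dx : Matrix q l ℝ) (Dy : Matrix p k ℝ) (Gx : Matrix k q ℝ) (Gy : Matrix p l ℝ)
    (Z E : Matrix k l ℝ) :
    trace (A * ((Z + E) * Dxᵀ - Gx) * B * ((Z + E) * Dxᵀ - Gx)ᵀ)
        + trace (C * (Dy * (Z + E) - Gy) * D * (Dy * (Z + E) - Gy)ᵀ) =
      trace (A * (Z * Dxᵀ - Gx) * B * (Z * Dxᵀ - Gx)ᵀ)
        + trace (C * (Dy * Z - Gy) * D * (Dy * Z - Gy)ᵀ)
        + 2 * trace ((Dyᵀ * C * Dy * Z * D + A * Z * Dxᵀ * B * Dx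
            - (Dyᵀ * C * Gy * D + A * Gx * B * Dx)) * Eᵀ)
        + (trace (A * (E * Dxᵀ) * B * (E * Dxᵀ)ᵀ) + trace (C * (Dy * E) * D * (Dy * E)ᵀ)) := by
  have hx : (Z + E) * Dxᵀ - Gx = (Z * Dxᵀ - Gx) + E * Dxᵀ := by rw [Matrix.add_mul]; abel
  have hy : Dy * (Z + E) - Gy = (Dy * Z - Gy) + Dy * E := by rw [Matrix.mul_add]; abel
  have hcross : trace (A * (Z * Dxᵀ - Gx) * B * (E * Dxᵀ)ᵀ)
        + trace (C * (Dy * Z - Gy) * D * (Dy * E)ᵀ) =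
      trace ((Dyᵀ * C * Dy * Z * D + A * Z * Dxᵀ * B * Dx
            - (Dyᵀ * C * Gy * D + A * Gx * B * Dx)) * Eᵀ) := by
    rw [transpose_mul, transpose_mul, transpose_transpose, ← Matrix.mul_assoc,
      trace_mul_cycle', ← trace_add]
    congr 1
    simp only [Matrix.mul_sub, Matrix.sub_mul, Matrix.mul_assoc, Matrix.add_mul]
    abel
  rw [hx, hy, trace_mul_add_mul_mul_transpose_add hA hB,
    trace_mul_add_mul_mul_transpose_add hC hD]
  linarith

end Matrix

/-- Weighted (Mahalanobis) least squares: with symmetric positive definite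
covariance matrices, `Z` minimizes
`ε(Z) = trace(Λxy⁻¹ (Z Dxᵀ − Gx) Λxx⁻¹ (Z Dxᵀ − Gx)ᵀ)
       + trace(Λyy⁻¹ (Dy Z − Gy) Λyx⁻¹ (Dy Z − Gy)ᵀ)`
iff `Z` satisfies
`Dyᵀ Λyy⁻¹ Dy Z Λyx⁻¹ + Λxy⁻¹ Z Dxᵀ Λxx⁻¹ Dx
  = Dyᵀ Λyy⁻¹ Gy Λyx⁻¹ + Λxy⁻¹ Gx Λxx⁻¹ Dx`. -/
theorem weighted_minimizer_iff_normal_equations {m n : ℕ}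
    (Λxy Λyy : Matrix (Fin m) (Fin m) ℝ) (Λxx Λyx : Matrix (Fin n) (Fin n) ℝ)
    (hΛxy : Λxy.PosDef) (hΛyy : Λyy.PosDef) (hΛxx : Λxx.PosDef) (hΛyx : Λyx.PosDef)
    (Dy : Matrix (Fin m) (Fin m) ℝ) (Dx : Matrix (Fin n) (Fin n) ℝ)
    (Gy Gx : Matrix (Fin m) (Fin n) ℝ)
    (ε : Matrix (Fin m) (Fin n) ℝ → ℝ)
    (hε : ∀ Z, ε Z = trace (Λxy⁻¹ * (Z * Dxᵀ - Gx) * Λxx⁻¹ * (Z * Dxᵀ - Gx)ᵀ)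
      + trace (Λyy⁻¹ * (Dy * Z - Gy) * Λyx⁻¹ * (Dy * Z - Gy)ᵀ))
    (Z : Matrix (Fin m) (Fin n) ℝ) :
    (∀ W : Matrix (Fin m) (Fin n) ℝ, ε Z ≤ ε W) ↔
      Dyᵀ * Λyy⁻¹ * Dy * Z * Λyx⁻¹ + Λxy⁻¹ * Z * Dxᵀ * Λxx⁻¹ * Dx =
        Dyᵀ * Λyy⁻¹ * Gy * Λyx⁻¹ + Λxy⁻¹ * Gx * Λxx⁻¹ * Dx := by
  have isSymm_inv {ι : Type} [Fintype ι] [DecidableEq ι] {Λ : Matrix ι ι ℝ} (hΛ : Λ.PosDef) :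
      Λ⁻¹.IsSymm :=
    isHermitian_iff_isSymm.mp hΛ.inv.isHermitian
  rw [← sub_eq_zero, ← forall_trace_mul_transpose_eq_zero_iff]
  refine (forall_le_iff_forall_eq_zero_of_quadratic_expansion
    (q := fun E => trace (Λxy⁻¹ * (E * Dxᵀ) * Λxx⁻¹ * (E * Dxᵀ)ᵀ)
      + trace (Λyy⁻¹ * (Dy * E) * Λyx⁻¹ * (Dy * E)ᵀ)) (fun t E => ?_) (fun t E => ?_)
    (fun E => ?_) (fun E => ?_)).trans (forall_congr' fun E => mul_eq_zero_iff_left two_ne_zero)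
  · simp only [transpose_smul, Matrix.mul_smul, trace_smul, smul_eq_mul]
    ring
  · simp only [transpose_smul, Matrix.mul_smul, Matrix.smul_mul, trace_smul, smul_eq_mul]
    ring
  · exact add_nonneg
      (trace_mul_mul_mul_transpose_nonneg hΛxy.inv.posSemidef hΛxx.inv.posSemidef _)
      (trace_mul_mul_mul_transpose_nonneg hΛyy.inv.posSemidef hΛyx.inv.posSemidef _)
  · simp only [hε]
    exact trace_weighted_cost_add (isSymm_inv hΛxy) (isSymm_inv hΛxx)
      (isSymm_inv hΛyy) (isSymm_inv hΛyx) Dx Dy Gx Gy Z E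
end

section
/- Let u ∈ ℝᵐ and v ∈ ℝⁿ be nonzero vectors with u ≠ −‖u‖₂ e₁ and v ≠ −‖v‖₂ e₁, and let P_a = I_m − 2 ũ ũᵀ/(ũᵀ ũ) and P_b = I_n − 2 ṽ ṽᵀ/(ṽᵀ ṽ) be the Householder reflections with ũ = u + ‖u‖₂ e₁ and ṽ = v + ‖v‖₂ e₁. Then for every real m×n matrix Ψ, uᵀ (P_a Ψ P_bᵀ) v = ‖u‖₂ ‖v‖₂ · Ψ_{11}, where Ψ_{11} is the (1,1) entry of Ψ. In particular, if Ψ_{11} = 0, then the transformed surface Φ = P_a Ψ P_bᵀ satisfies the implicit constraint uᵀ Φ v = 0. -/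
open Matrix

/-!
A Householder reflection `P` is symmetric and sends `u` to `-‖u‖₂ e₁`, so
`uᵀ (P_a Ψ P_bᵀ) v = (P_a u)ᵀ Ψ (P_b v) = (‖u‖₂ e₁)ᵀ Ψ (‖v‖₂ e₁) = ‖u‖₂ ‖v‖₂ Ψ₁₁`.
-/

namespace Matrix

variable {ι K : Type*} [Fintype ι] [DecidableEq ι] [Field K]

def householder (w : ι → K) : Matrix ι ι K :=
  1 - (2 / (w ⬝ᵥ w)) • vecMulVec w w

theorem householder_transpose (w : ι → K) : (householder w)ᵀ = householder w := by
  simp [householder, transpose_sub, transpose_smul, transpose_vecMulVec]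

theorem householder_add_mulVec_left {x y : ι → K} (hxy : x ⬝ᵥ x = y ⬝ᵥ y)
    (hw : (x + y) ⬝ᵥ (x + y) ≠ 0) : householder (x + y) *ᵥ x = -y := by
  have hww : (x + y) ⬝ᵥ (x + y) = 2 * ((x + y) ⬝ᵥ x) := by
    simp only [add_dotProduct, dotProduct_add, dotProduct_comm y x, hxy]
    ring
  have hcoef : 2 / ((x + y) ⬝ᵥ (x + y)) * ((x + y) ⬝ᵥ x) = 1 := by
    rw [div_mul_eq_mul_div, ← hww, div_self hw]
  rw [householder, sub_mulVec, one_mulVec, smul_mulVec, vecMulVec_mulVec, op_smul_eq_smul,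
    smul_smul, hcoef, one_smul]
  abel

theorem dotProduct_mul_mul_mulVec {m n : Type*} [Fintype m] [Fintype n] (u : m → K)
    (A : Matrix m m K) (Ψ : Matrix m n K) (B : Matrix n n K) (v : n → K) :
    u ⬝ᵥ ((A * Ψ * B) *ᵥ v) = (Aᵀ *ᵥ u) ⬝ᵥ (Ψ *ᵥ (B *ᵥ v)) := by
  rw [← mulVec_mulVec, ← mulVec_mulVec, dotProduct_mulVec, mulVec_transpose]

end Matrix

theorem Real.sqrt_sum_sq_smul_single_dotProduct_self {ι : Type*} [Fintype ι] [DecidableEq ι]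
    (u : ι → ℝ) (i : ι) :
    (√(∑ j, u j ^ 2) • Pi.single i 1) ⬝ᵥ (√(∑ j, u j ^ 2) • Pi.single i 1) = u ⬝ᵥ u := by
  rw [smul_dotProduct, dotProduct_smul, single_dotProduct, Pi.single_eq_same, smul_eq_mul,
    smul_eq_mul, mul_one, ← mul_assoc, Real.mul_self_sqrt (by positivity)]
  simp [dotProduct, sq]

theorem Real.householder_mulVec_self {ι : Type*} [Fintype ι] [DecidableEq ι] (u : ι → ℝ) (i : ι)
    (hu : u ≠ -(√(∑ j, u j ^ 2) • Pi.single i 1)) :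
    householder (u + √(∑ j, u j ^ 2) • Pi.single i 1) *ᵥ u = -(√(∑ j, u j ^ 2) • Pi.single i 1) :=
  householder_add_mulVec_left (Real.sqrt_sum_sq_smul_single_dotProduct_self u i).symm <|
    dotProduct_self_eq_zero.not.mpr fun h ↦ hu (eq_neg_of_add_eq_zero_left h)

theorem householder_implicit_constraint_general {m n : ℕ} [NeZero m] [NeZero n]
    (u : Fin m → ℝ) (v : Fin n → ℝ)
    (nrmu : ℝ) (hnrmu : nrmu = Real.sqrt (∑ i, u i ^ 2))
    (nrmv : ℝ) (hnrmv : nrmv = Real.sqrt (∑ j, v j ^ 2))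
    (e₁m : Fin m → ℝ) (he₁m : e₁m = Pi.single (0 : Fin m) (1 : ℝ))
    (e₁n : Fin n → ℝ) (he₁n : e₁n = Pi.single (0 : Fin n) (1 : ℝ))
    (hneu : u ≠ -(nrmu • e₁m)) (hnev : v ≠ -(nrmv • e₁n))
    (ut : Fin m → ℝ) (hut : ut = u + nrmu • e₁m)
    (vt : Fin n → ℝ) (hvt : vt = v + nrmv • e₁n)
    (Pa : Matrix (Fin m) (Fin m) ℝ)
    (hPa : Pa = 1 - (2 / (ut ⬝ᵥ ut)) • vecMulVec ut ut)
    (Pb : Matrix (Fin n) (Fin n) ℝ)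
    (hPb : Pb = 1 - (2 / (vt ⬝ᵥ vt)) • vecMulVec vt vt)
    (Ψ : Matrix (Fin m) (Fin n) ℝ) :
    u ⬝ᵥ ((Pa * Ψ * Pbᵀ) *ᵥ v) = nrmu * nrmv * Ψ 0 0 ∧
    (Ψ 0 0 = 0 → u ⬝ᵥ ((Pa * Ψ * Pbᵀ) *ᵥ v) = 0) := by
  have hPau : Pa *ᵥ u = -(nrmu • e₁m) := by
    subst_vars; exact Real.householder_mulVec_self u 0 hneu
  have hPbv : Pb *ᵥ v = -(nrmv • e₁n) := by
    subst_vars; exact Real.householder_mulVec_self v 0 hnev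
  have hPaT : Paᵀ = Pa := by subst hPa; exact householder_transpose ut
  have hPbT : Pbᵀ = Pb := by subst hPb; exact householder_transpose vt
  have key : u ⬝ᵥ ((Pa * Ψ * Pbᵀ) *ᵥ v) = nrmu * nrmv * Ψ 0 0 := by
    rw [dotProduct_mul_mul_mulVec, hPaT, hPbT, hPau, hPbv, he₁m, he₁n]
    simp only [mulVec_neg, mulVec_smul, mulVec_single, MulOpposite.op_one, one_smul,
      dotProduct_neg, neg_dotProduct, dotProduct_smul, smul_dotProduct,
      single_dotProduct, col_apply, one_mul, smul_eq_mul]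
    ring
  exact ⟨key, fun h ↦ by rw [key, h, mul_zero]⟩

/-- For Householder reflections `P_a`, `P_b` built from nonzero vectors `u`, `v`,
one has `uᵀ (P_a Ψ P_bᵀ) v = ‖u‖₂ ‖v‖₂ Ψ₁₁` for every `Ψ`; in particular if
`Ψ₁₁ = 0` then the transformed surface `Φ = P_a Ψ P_bᵀ` satisfies `uᵀ Φ v = 0`. -/
theorem householder_implicit_constraint {m n : ℕ} [NeZero m] [NeZero n]
    (u : Fin m → ℝ) (hu : u ≠ 0) (v : Fin n → ℝ) (hv : v ≠ 0)
    (nrmu : ℝ) (hnrmu : nrmu = Real.sqrt (∑ i, u i ^ 2))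
    (nrmv : ℝ) (hnrmv : nrmv = Real.sqrt (∑ j, v j ^ 2))
    (e₁m : Fin m → ℝ) (he₁m : e₁m = Pi.single (0 : Fin m) (1 : ℝ))
    (e₁n : Fin n → ℝ) (he₁n : e₁n = Pi.single (0 : Fin n) (1 : ℝ))
    (hneu : u ≠ -(nrmu • e₁m)) (hnev : v ≠ -(nrmv • e₁n))
    (ut : Fin m → ℝ) (hut : ut = u + nrmu • e₁m)
    (vt : Fin n → ℝ) (hvt : vt = v + nrmv • e₁n)
    (Pa : Matrix (Fin m) (Fin m) ℝ)
    (hPa : Pa = 1 - (2 / (ut ⬝ᵥ ut)) • vecMulVec ut ut)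
    (Pb : Matrix (Fin n) (Fin n) ℝ)
    (hPb : Pb = 1 - (2 / (vt ⬝ᵥ vt)) • vecMulVec vt vt)
    (Ψ : Matrix (Fin m) (Fin n) ℝ) :
    u ⬝ᵥ ((Pa * Ψ * Pbᵀ) *ᵥ v) = nrmu * nrmv * Ψ 0 0 ∧
    (Ψ 0 0 = 0 → u ⬝ᵥ ((Pa * Ψ * Pbᵀ) *ᵥ v) = 0) :=
  householder_implicit_constraint_general u v nrmu hnrmu nrmv hnrmv e₁m he₁m e₁n he₁n hneu hnev ut
    hut vt hvt Pa hPa Pb hPb Ψ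
end
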